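/- Let g ∈ H', f^0 ∈ H, and define the iterates f^{n+1} = T(f^n) where T(f) = S_{W,P}(f + K*(g − Kf)) (equivalently, f^{n+1} is the unique minimizer of f ↦ Φ^sur(f; f^n)). Then both sequences (Φ(f^n))_{n∈ℕ} and (Φ^sur(f^{n+1}; f^n))_{n∈ℕ} are non-increasing; in particular Φ(f^{n+1}) ≤ Φ^sur(f^{n+1}; f^n) ≤ Φ(f^n) for every n. -/

import Mathlib

/-!
For `‖K‖ ≤ 1` the surrogate `Φ^sur(·; a)` majorizes `Φ` and touches it at `a`. Its quadratic
part is, up to a constant, `‖f - b‖²` with `b = a + K*(g - K a)`, so by Parseval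
`Φ^sur(f; a)` is a constant plus `∑_γ ((f_γ - b_γ)² + w_γ |f_γ|^{p_γ})`, which `T a` minimizes
coordinate by coordinate. Majorization together with descent of the surrogate gives the
monotonicity of both sequences.
-/

open scoped RealInnerProductSpace ENNReal InnerProduct

theorem antitone_of_majorize_minimize {X α : Type*} [Preorder α] {Φ : X → α}
    {Φsur : X → X → α} {T : X → X} {x : ℕ → X}
    (hmaj : ∀ f a, Φ f ≤ Φsur f a) (hdesc : ∀ a, Φsur (T a) a ≤ Φ a)
    (hx : ∀ n, x (n + 1) = T (x n)) :
    Antitone (fun n => Φ (x n)) ∧ Antitone (fun n => Φsur (x (n + 1)) (x n)) ∧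
      ∀ n, Φ (x (n + 1)) ≤ Φsur (x (n + 1)) (x n) ∧ Φsur (x (n + 1)) (x n) ≤ Φ (x n) := by
  have sandwich : ∀ n, Φ (x (n + 1)) ≤ Φsur (x (n + 1)) (x n) ∧
      Φsur (x (n + 1)) (x n) ≤ Φ (x n) := fun n => ⟨hmaj _ _, hx n ▸ hdesc _⟩
  refine ⟨antitone_nat_of_succ_le fun n => (sandwich n).1.trans (sandwich n).2,
    antitone_nat_of_succ_le fun n => ?_, sandwich⟩
  exact (sandwich (n + 1)).2.trans (sandwich n).1

theorem HilbertBasis.ofReal_norm_sq_eq_tsum {ι E : Type*} [NormedAddCommGroup E]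
    [InnerProductSpace ℝ E] (e : HilbertBasis ι ℝ E) (x : E) :
    ENNReal.ofReal (‖x‖ ^ 2) = ∑' i, ENNReal.ofReal (⟪x, e i⟫ ^ 2) := by
  have parseval : HasSum (fun i => ⟪x, e i⟫ ^ 2) (‖x‖ ^ 2) := by
    simpa only [real_inner_comm x, ← sq, real_inner_self_eq_norm_sq]
      using e.hasSum_inner_mul_inner x x
  rw [← parseval.tsum_eq, ENNReal.ofReal_tsum_of_nonneg (fun _ => sq_nonneg _) parseval.summable]

theorem ENNReal.ofReal_sq_sub_add_ofReal_le {b s x u v : ℝ} (hu : 0 ≤ u) (hv : 0 ≤ v)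
    (h : s ^ 2 - 2 * b * s + u ≤ x ^ 2 - 2 * b * x + v) :
    ENNReal.ofReal ((s - b) ^ 2) + ENNReal.ofReal u ≤
      ENNReal.ofReal ((x - b) ^ 2) + ENNReal.ofReal v := by
  rw [← ENNReal.ofReal_add (sq_nonneg _) hu, ← ENNReal.ofReal_add (sq_nonneg _) hv]
  exact ENNReal.ofReal_le_ofReal (by nlinarith)

theorem sq_norm_apply_le_of_norm_le_one {E F : Type*} [SeminormedAddCommGroup E]
    [SeminormedAddCommGroup F] [NormedSpace ℝ E] [NormedSpace ℝ F] {K : E →L[ℝ] F}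
    (hK : ‖K‖ ≤ 1) (x : E) : ‖K x‖ ^ 2 ≤ ‖x‖ ^ 2 := by
  have := K.le_of_opNorm_le hK x
  gcongr
  linarith

section Surrogate

variable {H H' : Type*} [NormedAddCommGroup H] [InnerProductSpace ℝ H]
  [NormedAddCommGroup H'] [InnerProductSpace ℝ H'] (K : H →L[ℝ] H') (g : H')

def surrogateQuadratic (a f : H) : ℝ := ‖K f - g‖ ^ 2 + (‖f - a‖ ^ 2 - ‖K (f - a)‖ ^ 2)

variable {K}

theorem surrogateQuadratic_nonneg (hK : ‖K‖ ≤ 1) (a f : H) : 0 ≤ surrogateQuadratic K g a f :=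
  add_nonneg (sq_nonneg _) (sub_nonneg.mpr (sq_norm_apply_le_of_norm_le_one hK _))

theorem ofReal_surrogateQuadratic (hK : ‖K‖ ≤ 1) (a f : H) :
    ENNReal.ofReal (surrogateQuadratic K g a f) =
      ENNReal.ofReal (‖K f - g‖ ^ 2) + ENNReal.ofReal (‖f - a‖ ^ 2 - ‖K (f - a)‖ ^ 2) :=
  ENNReal.ofReal_add (sq_nonneg _) (sub_nonneg.mpr (sq_norm_apply_le_of_norm_le_one hK _))

variable [CompleteSpace H] [CompleteSpace H'] (K)

noncomputable def landweber (a : H) : H := a + (K†) (g - K a)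

theorem surrogateQuadratic_eq_expand (a f : H) :
    surrogateQuadratic K g a f =
      ‖f‖ ^ 2 - 2 * ⟪f, landweber K g a⟫ + (‖g‖ ^ 2 + ‖a‖ ^ 2 - ‖K a‖ ^ 2) := by
  rw [surrogateQuadratic, landweber, norm_sub_sq_real (K f) g, norm_sub_sq_real f a, map_sub,
    norm_sub_sq_real (K f) (K a), inner_add_right, K.adjoint_inner_right, inner_sub_right]
  ring

theorem surrogateQuadratic_eq_sq_norm_sub_landweber (a f : H) :
    surrogateQuadratic K g a f =
      ‖f - landweber K g a‖ ^ 2 + surrogateQuadratic K g a (landweber K g a) := by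
  rw [surrogateQuadratic_eq_expand, surrogateQuadratic_eq_expand, norm_sub_sq_real,
    real_inner_self_eq_norm_sq]
  ring

variable {K} {Γ : Type*} (e : HilbertBasis Γ ℝ H) (ψ : Γ → ℝ → ℝ≥0∞)

theorem ofReal_surrogateQuadratic_add_tsum_eq (hK : ‖K‖ ≤ 1) (a f : H) :
    ENNReal.ofReal (surrogateQuadratic K g a f) + ∑' γ, ψ γ ⟪f, e γ⟫ =
      ENNReal.ofReal (surrogateQuadratic K g a (landweber K g a)) +
        ∑' γ, (ENNReal.ofReal ((⟪f, e γ⟫ - ⟪landweber K g a, e γ⟫) ^ 2) + ψ γ ⟪f, e γ⟫) := by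
  rw [surrogateQuadratic_eq_sq_norm_sub_landweber, ENNReal.ofReal_add (sq_nonneg _)
    (surrogateQuadratic_nonneg g hK _ _), e.ofReal_norm_sq_eq_tsum, ENNReal.tsum_add]
  simp only [inner_sub_left]
  ring

theorem ofReal_surrogateQuadratic_add_tsum_le (hK : ‖K‖ ≤ 1) {a t : H}
    (ht : ∀ γ x, ENNReal.ofReal ((⟪t, e γ⟫ - ⟪landweber K g a, e γ⟫) ^ 2) + ψ γ ⟪t, e γ⟫ ≤
      ENNReal.ofReal ((x - ⟪landweber K g a, e γ⟫) ^ 2) + ψ γ x) (f : H) :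
    ENNReal.ofReal (surrogateQuadratic K g a t) + ∑' γ, ψ γ ⟪t, e γ⟫ ≤
      ENNReal.ofReal (surrogateQuadratic K g a f) + ∑' γ, ψ γ ⟪f, e γ⟫ := by
  rw [ofReal_surrogateQuadratic_add_tsum_eq g e ψ hK a t,
    ofReal_surrogateQuadratic_add_tsum_eq g e ψ hK a f]
  exact add_le_add_right (ENNReal.tsum_le_tsum fun γ => ht γ _) _

end Surrogate

theorem stmt_10_general
    {H H' : Type*} [NormedAddCommGroup H] [InnerProductSpace ℝ H] [CompleteSpace H]
    [NormedAddCommGroup H'] [InnerProductSpace ℝ H'] [CompleteSpace H']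
    {Γ : Type*}
    (e : HilbertBasis Γ ℝ H)
    (K : H →L[ℝ] H') (hK : ‖K‖ < 1)
    (w : Γ → ℝ) (c : ℝ) (hc : 0 < c) (hw : ∀ γ, c ≤ w γ)
    (p : Γ → ℝ)
    (g : H')
    (Φ : H → ℝ≥0∞)
    (hΦ : ∀ f, Φ f = ENNReal.ofReal (‖K f - g‖ ^ 2) +
      ∑' γ, ENNReal.ofReal (w γ * |⟪f, e γ⟫| ^ (p γ)))
    (Φsur : H → H → ℝ≥0∞)
    (hΦsur : ∀ f a', Φsur f a' = Φ f + ENNReal.ofReal (‖f - a'‖ ^ 2 - ‖K (f - a')‖ ^ 2))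
    (S : Γ → ℝ → ℝ)
    (hS : ∀ (γ : Γ) (b x : ℝ),
      (S γ b) ^ 2 - 2 * b * S γ b + w γ * |S γ b| ^ (p γ) ≤
        x ^ 2 - 2 * b * x + w γ * |x| ^ (p γ))
    (T : H → H)
    (hT : ∀ (f : H) (γ : Γ),
      ⟪T f, e γ⟫ = S γ ⟪f + (ContinuousLinearMap.adjoint K) (g - K f), e γ⟫)
    (fseq : ℕ → H)
    (hstep : ∀ n, fseq (n + 1) = T (fseq n)) :
    Antitone (fun n => Φ (fseq n)) ∧
    Antitone (fun n => Φsur (fseq (n + 1)) (fseq n)) ∧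
    ∀ n, Φ (fseq (n + 1)) ≤ Φsur (fseq (n + 1)) (fseq n) ∧
      Φsur (fseq (n + 1)) (fseq n) ≤ Φ (fseq n) := by
  have hK1 : ‖K‖ ≤ 1 := hK.le
  have hpen : ∀ γ (x : ℝ), 0 ≤ w γ * |x| ^ (p γ) := fun γ x =>
    mul_nonneg (hc.le.trans (hw γ)) (Real.rpow_nonneg (abs_nonneg x) _)
  have hsur : ∀ f a, Φsur f a = ENNReal.ofReal (surrogateQuadratic K g a f) +
      ∑' γ, ENNReal.ofReal (w γ * |⟪f, e γ⟫| ^ (p γ)) := fun f a => by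
    rw [hΦsur, hΦ, add_right_comm, ofReal_surrogateQuadratic g hK1]
  have hdesc : ∀ a, Φsur (T a) a ≤ Φ a := fun a => by
    have hself : Φsur a a = Φ a := by simp [hΦsur]
    rw [← hself, hsur, hsur]
    refine ofReal_surrogateQuadratic_add_tsum_le g e (fun γ x => ENNReal.ofReal (w γ * |x| ^ p γ))
      hK1 (fun γ x => ?_) a
    rw [hT]
    exact ENNReal.ofReal_sq_sub_add_ofReal_le (hpen γ _) (hpen γ _) (hS γ _ x)
  exact antitone_of_majorize_minimize (fun f a => hΦsur f a ▸ le_self_add) hdesc hstep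

/-- Along the iterates `f^{n+1} = T(f^n)` with `T(f) = S_{W,P}(f + K*(g − Kf))`, both
`(Φ(f^n))` and `(Φ^sur(f^{n+1}; f^n))` are non-increasing; in particular
`Φ(f^{n+1}) ≤ Φ^sur(f^{n+1}; f^n) ≤ Φ(f^n)`. -/
theorem stmt_10
    {H H' : Type*} [NormedAddCommGroup H] [InnerProductSpace ℝ H] [CompleteSpace H]
    [NormedAddCommGroup H'] [InnerProductSpace ℝ H'] [CompleteSpace H']
    {Γ : Type*} [Countable Γ]
    (e : HilbertBasis Γ ℝ H)
    (K : H →L[ℝ] H') (hK : ‖K‖ < 1)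
    (w : Γ → ℝ) (c : ℝ) (hc : 0 < c) (hw : ∀ γ, c ≤ w γ)
    (p : Γ → ℝ) (hp : ∀ γ, 1 ≤ p γ ∧ p γ ≤ 2)
    (g : H')
    (Φ : H → ℝ≥0∞)
    (hΦ : ∀ f, Φ f = ENNReal.ofReal (‖K f - g‖ ^ 2) +
      ∑' γ, ENNReal.ofReal (w γ * |⟪f, e γ⟫| ^ (p γ)))
    (Φsur : H → H → ℝ≥0∞)
    (hΦsur : ∀ f a', Φsur f a' = Φ f + ENNReal.ofReal (‖f - a'‖ ^ 2 - ‖K (f - a')‖ ^ 2))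
    (S : Γ → ℝ → ℝ)
    (hS : ∀ (γ : Γ) (b x : ℝ),
      (S γ b) ^ 2 - 2 * b * S γ b + w γ * |S γ b| ^ (p γ) ≤
        x ^ 2 - 2 * b * x + w γ * |x| ^ (p γ))
    (T : H → H)
    (hT : ∀ (f : H) (γ : Γ),
      ⟪T f, e γ⟫ = S γ ⟪f + (ContinuousLinearMap.adjoint K) (g - K f), e γ⟫)
    (fseq : ℕ → H)
    (hstep : ∀ n, fseq (n + 1) = T (fseq n)) :
    Antitone (fun n => Φ (fseq n)) ∧
    Antitone (fun n => Φsur (fseq (n + 1)) (fseq n)) ∧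
    ∀ n, Φ (fseq (n + 1)) ≤ Φsur (fseq (n + 1)) (fseq n) ∧
      Φsur (fseq (n + 1)) (fseq n) ≤ Φ (fseq n) :=
  stmt_10_general e K hK w c hc hw p g Φ hΦ Φsur hΦsur S hS T hT fseq hstep
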